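/- arXiv:1707.01923 — 3 statements merged into one kernel-verified Lean document; each statement's English description precedes it below -/
import Mathlib

section
/- Generator intertwining between FTASEP(α) and half-line TASEP. For every x ∈ 𝕏 and every cylinder function f : {0,1}^{ℤ_{>0}} → ℝ, one has L^half_α f(Φ(x)) = L^FTASEP_α (f ∘ Φ)(x). (Both sums defining the generators have only finitely many nonzero terms when f is a cylinder function.) -/
/-!
Generator intertwining between FTASEP(α) and the half-line TASEP:
`L^half_α f (Φ x) = L^FTASEP_α (f ∘ Φ) x` for every configuration `x ∈ 𝕏` and every
cylinder function `f`.

Particles and sites are indexed by `ℕ` (index `i` standing for the `(i+1)`-st particle/site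
of the paper), so that the state space `𝕏` consists of `x : ℕ → ℤ` with
`x i - x (i+1) ∈ {1,2}` for all `i`, and `Φ x i = x i - x (i+1) - 1 ∈ {0,1}`.
-/

noncomputable section

/-- The map `Φ` sending particle positions to occupation variables (gaps minus one). -/
def PhiMap (x : ℕ → ℤ) : ℕ → ℤ := fun i => x i - x (i+1) - 1

/-- The configuration obtained from `g` by exchanging the occupation variables at
sites `i` and `i+1`. -/
def swapSites (g : ℕ → ℤ) (i : ℕ) : ℕ → ℤ :=
  Function.update (Function.update g i (g (i+1))) (i+1) (g i)

/-- `f` is a cylinder (local) function: it depends on finitely many coordinates. -/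
def IsCylinder (f : (ℕ → ℤ) → ℝ) : Prop :=
  ∃ S : Finset ℕ, ∀ g g' : ℕ → ℤ, (∀ i ∈ S, g i = g' i) → f g = f g'

/-- The generator of the half-line TASEP with a source injecting particles at rate `α`
at the first site:
`L^half_α f(g) = α (f(g^{1→1}) - f(g)) + Σ_x g_x (1 - g_{x+1}) (f(g_{x,x+1}) - f(g))`. -/
def Lhalf (α : ℝ) (f : (ℕ → ℤ) → ℝ) (g : ℕ → ℤ) : ℝ :=
  α * (f (Function.update g 0 1) - f g) +
    ∑' i : ℕ, (g i : ℝ) * (1 - (g (i+1) : ℝ)) * (f (swapSites g i) - f g)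

/-- The generator of the FTASEP(`α`) (facilitated TASEP whose first particle jumps at
rate `α`):
`L^FTASEP_α F(x) = α 1{x_1 - x_2 = 1}(F(x^{+1}) - F(x))
  + Σ_{i ≥ 2} 1{x_i - x_{i+1} = 1} 1{x_{i-1} - x_i = 2} (F(x^{+i}) - F(x))`. -/
def Lftasep (α : ℝ) (F : (ℕ → ℤ) → ℝ) (x : ℕ → ℤ) : ℝ :=
  α * (if x 0 - x 1 = 1 then (1:ℝ) else 0) * (F (Function.update x 0 (x 0 + 1)) - F x) +
    ∑' i : ℕ,
      (if x (i+1) - x (i+2) = 1 ∧ x i - x (i+1) = 2 then (1:ℝ) else 0) *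
        (F (Function.update x (i+1) (x (i+1) + 1)) - F x)

/-- **Generator intertwining between FTASEP(α) and half-line TASEP.**
For every `x ∈ 𝕏` (gaps in `{0,1}`, i.e. `x i - x (i+1) ∈ {1,2}`) and every cylinder
function `f`, one has `L^half_α f (Φ x) = L^FTASEP_α (f ∘ Φ) x`. -/
theorem generator_intertwining (α : ℝ) (hα : 0 < α) (x : ℕ → ℤ)
    (hx : ∀ i, x i - x (i+1) = 1 ∨ x i - x (i+1) = 2)
    (f : (ℕ → ℤ) → ℝ) (hf : IsCylinder f) :
    Lhalf α f (PhiMap x) = Lftasep α (fun y => f (PhiMap y)) x := by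
  unfold Lhalf Lftasep
  congr 1
  · -- boundary term
    rcases hx 0 with h | h
    · have h' : x 0 - x 1 = 1 := h
      rw [if_pos h', mul_one]
      have : Function.update (PhiMap x) 0 1 = PhiMap (Function.update x 0 (x 0 + 1)) := by
        funext j
        cases j with
        | zero => simp [PhiMap, Function.update_apply]; omega
        | succ n => simp [PhiMap, Function.update_apply]
      rw [this]
    · have h' : x 0 - x 1 = 2 := h
      have h1 : x 0 - x 1 ≠ 1 := by omega
      rw [if_neg h1, mul_zero, zero_mul]
      have : Function.update (PhiMap x) 0 1 = PhiMap x := by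
        funext j
        cases j with
        | zero => simp [PhiMap, Function.update_apply]; omega
        | succ n => simp [PhiMap, Function.update_apply]
      rw [this]
      ring
  · apply tsum_congr
    intro i
    have hn : x (i+1+1) = x (i+2) := rfl
    have hxi := hx i
    have hxi1 : x (i+1) - x (i+2) = 1 ∨ x (i+1) - x (i+2) = 2 := hx (i+1)
    rcases hxi with h1 | h1 <;> rcases hxi1 with h2 | h2
    · -- g i = 0
      have : (PhiMap x i : ℝ) = 0 := by simp [PhiMap]; exact_mod_cast (by omega : x i - x (i+1) - 1 = 0)
      rw [this, if_neg (by omega), zero_mul, zero_mul, zero_mul]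
    · have : (PhiMap x i : ℝ) = 0 := by simp [PhiMap]; exact_mod_cast (by omega : x i - x (i+1) - 1 = 0)
      rw [this, if_neg (by omega), zero_mul, zero_mul, zero_mul]
    · -- the interesting case: g i = 1, g (i+1) = 0
      have e1 : (PhiMap x i : ℝ) = 1 := by
        simp only [PhiMap]; exact_mod_cast (by omega : x i - x (i+1) - 1 = 1)
      have e2 : (PhiMap x (i+1) : ℝ) = 0 := by
        simp only [PhiMap]; exact_mod_cast (by omega : x (i+1) - x (i+1+1) - 1 = 0)
      rw [e1, e2, if_pos ⟨h2, h1⟩]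
      have hswap : swapSites (PhiMap x) i
          = PhiMap (Function.update x (i+1) (x (i+1) + 1)) := by
        funext j
        rcases eq_or_ne j i with rfl | hji
        · have : j + 1 ≠ j := by omega
          have hn' : x (j+1+1) = x (j+2) := rfl
          simp [swapSites, PhiMap, Function.update_apply]
          omega
        · rcases eq_or_ne j (i+1) with rfl | hji1
          · simp [swapSites, PhiMap, Function.update_apply, hji]
            omega
          · have hj1 : j + 1 ≠ i + 1 := by omega
            simp [swapSites, PhiMap, Function.update_apply, hji, hji1, hj1]
      rw [hswap]
      ring
    · -- g (i+1) = 1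
      have : (PhiMap x (i+1) : ℝ) = 1 := by
        simp only [PhiMap]; exact_mod_cast (by omega : x (i+1) - x (i+1+1) - 1 = 1)
      rw [this, if_neg (by omega), zero_mul]
      ring

end
end

section
/- Waiting-time recursion for half-line TASEP equals half-space LPP. Let w = (w_{n,m}) be arbitrary real weights indexed by integer pairs n ≥ m ≥ 1, and let H be the associated last passage times. Define A(j,k) for integers j ≥ 0, k ≥ 1 by: A(0,k) = 0 for all k ≥ 1; A(j,1) = w_{j,j} + A(j−1, 2) for j ≥ 1; and A(j,k) = w_{k+j−1, j} + max( A(j, k−1), A(j−1, k+1) ) for j ≥ 1, k ≥ 2. Then A(j,k) = H(k+j−1, j) for all j ≥ 0, k ≥ 1. (Interpretation: when w_{i,j} is the (i−j+1)-th waiting time of the j-th particle in the half-line TASEP with a source at the origin started from the empty configuration, A(j,k) is the time at which the j-th particle reaches site k.) -/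
/-!
Waiting-time recursion for the half-line TASEP equals half-space LPP:
with `A(j,k)` the time at which the `j`-th particle of the half-line TASEP reaches
site `k` (expressed through the waiting times `w`), one has `A(j,k) = H(k+j-1, j)`.
-/

/-- **Waiting-time recursion equals half-space LPP.**
Let `w n m` (for `n ≥ m ≥ 1`) be arbitrary real weights and `H` the associated half-space
last passage times, i.e. `H n 0 = 0`, `H n m = w n m + max (H (n-1) m) (H n (m-1))`
for `n ≥ m+1 ≥ 2`, and `H n n = w n n + H n (n-1)` for `n ≥ 1`.
Define `A` by `A 0 k = 0` for `k ≥ 1`, `A j 1 = w j j + A (j-1) 2` for `j ≥ 1`, and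
`A j k = w (k+j-1) j + max (A j (k-1)) (A (j-1) (k+1))` for `j ≥ 1`, `k ≥ 2`.
Then `A j k = H (k+j-1) j` for all `j ≥ 0` and `k ≥ 1`. -/
theorem waiting_time_recursion_eq_halfspace_LPP
    (w : ℕ → ℕ → ℝ) (H : ℕ → ℕ → ℝ)
    (hH0 : ∀ n, H n 0 = 0)
    (hHrec : ∀ n m, 1 ≤ m → m + 1 ≤ n → H n m = w n m + max (H (n-1) m) (H n (m-1)))
    (hHdiag : ∀ n, 1 ≤ n → H n n = w n n + H n (n-1))
    (A : ℕ → ℕ → ℝ)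
    (hA0 : ∀ k, 1 ≤ k → A 0 k = 0)
    (hA1 : ∀ j, 1 ≤ j → A j 1 = w j j + A (j-1) 2)
    (hArec : ∀ j k, 1 ≤ j → 2 ≤ k → A j k = w (k+j-1) j + max (A j (k-1)) (A (j-1) (k+1))) :
    ∀ j k : ℕ, 1 ≤ k → A j k = H (k+j-1) j := by
  intro j
  induction j with
  | zero =>
    intro k hk
    rw [hA0 k hk]
    simp [hH0]
  | succ j ih =>
    intro k hk
    induction k, hk using Nat.le_induction with
    | base =>
      rw [hA1 (j+1) (by omega)]
      simp only [Nat.add_sub_cancel]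
      have h2 : A j 2 = H (2 + j - 1) j := ih 2 (by omega)
      have e1 : 2 + j - 1 = j + 1 := by omega
      have e2 : 1 + (j + 1) - 1 = j + 1 := by omega
      rw [h2, e1, e2, hHdiag (j+1) (by omega)]
      norm_num
    | succ k hk ihk =>
      rw [hArec (j+1) (k+1) (by omega) (by omega)]
      simp only [Nat.add_sub_cancel]
      have h1 : A (j+1) k = H (k + (j+1) - 1) (j+1) := ihk
      have h2 : A j (k+1+1) = H (k + 1 + 1 + j - 1) j := ih (k+1+1) (by omega)
      have e1 : k + 1 + (j+1) - 1 = k + j + 1 := by omega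
      have e2 : k + (j+1) - 1 = k + j := by omega
      have e3 : k + 1 + 1 + j - 1 = k + j + 1 := by omega
      have e4 : k + 1 - 1 = k := by omega
      rw [h1, h2, e1, e2, e3, hHrec (k+j+1) (j+1) (by omega) (by omega)]
      have e5 : k + j + 1 - 1 = k + j := by omega
      have e6 : j + 1 - 1 = j := by omega
      rw [e5, e6]
end

section
/- Gaussian contour integral evaluation. Let η, η′ ∈ ℝ with η < η′, and let x, y ∈ ℝ. Then (1/(2πi)) ∫_{𝒞_{1/4}^{π/3}} exp( (z−η)³/3 − (z−η′)³/3 − x(z−η) + y(z−η′) ) dz = exp( (−(η−η′)⁴ + 6(x+y)(η−η′)² + 3(x−y)²) / (12(η−η′)) ) / √(4π(η′−η)). -/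
/-!
Write the exponent as a quadratic `c z² + b z + d` with `c = η' - η > 0`. Along a ray
`a + t e^{iθ}` the integrand then decays like `exp (c t² cos 2θ)`, so for `cos 2θ < 0` the ray
integral `∫₀^∞ g(a + t e^{iθ}) e^{iθ} dt` converges, locally uniformly in `θ`. For holomorphic `g`
one has `∂_θ [g(a + t e^{iθ}) e^{iθ}] = ∂_t [i t g(a + t e^{iθ}) e^{iθ}]`, and the right-hand side
integrates to zero; hence the ray integral does not depend on `θ` in these sectors. Rotating the
two rays of `𝒞_a^{π/3}` to the angles `±π/2` turns the contour into the vertical line `a + iℝ`, on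
which the integral is the classical Gaussian integral `√(π/c) e^{d - b²/(4c)}`.
-/

noncomputable section

/-- The contour integral over the wedge contour `𝒞_a^φ` consisting of the two rays departing
from `a` with angles `±φ`, oriented from `a + ∞e^{-iφ}` to `a + ∞e^{iφ}`. -/
def contourIntegral (a φ : ℝ) (g : ℂ → ℂ) : ℂ :=
  ∫ t in Set.Ioi (0:ℝ),
    (g ((a:ℂ) + (t:ℂ) * Complex.exp (Complex.I * φ)) * Complex.exp (Complex.I * φ)
      - g ((a:ℂ) + (t:ℂ) * Complex.exp (-(Complex.I * φ))) * Complex.exp (-(Complex.I * φ)))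

open Complex MeasureTheory Set Filter Topology
open scoped Real

def rayIntegral (g : ℂ → ℂ) (a : ℂ) (θ : ℝ) : ℂ :=
  ∫ t in Ioi (0:ℝ), g (a + t * cexp (I * θ)) * cexp (I * θ)

/-- The weight `1 + t` makes `g`, `t g` and `t g'` dominated at once, as needed to differentiate
the ray integral in the angle. -/
def RayDominated (g : ℂ → ℂ) (a : ℂ) (θ₀ : ℝ) : Prop :=
  ∃ bound : ℝ → ℝ, IntegrableOn bound (Ioi 0) ∧ ∀ᶠ θ : ℝ in 𝓝 θ₀, ∀ t : ℝ, 0 < t →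
    (1 + t) * (‖g (a + t * cexp (I * θ))‖ + ‖deriv g (a + t * cexp (I * θ))‖) ≤ bound t

lemma contourIntegral_eq_rayIntegral_sub {a φ : ℝ} {g : ℂ → ℂ}
    (hpos : IntegrableOn (fun t : ℝ => g (a + t * cexp (I * φ)) * cexp (I * φ)) (Ioi 0))
    (hneg : IntegrableOn (fun t : ℝ => g (a + t * cexp (I * ↑(-φ))) * cexp (I * ↑(-φ))) (Ioi 0)) :
    contourIntegral a φ g = rayIntegral g a φ - rayIntegral g a (-φ) := by
  rw [contourIntegral, rayIntegral, rayIntegral, ← integral_sub hpos hneg]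
  push_cast [mul_neg]
  rfl

lemma rayIntegral_pi_div_two_sub_rayIntegral_neg {g : ℂ → ℂ} {a : ℂ}
    (hg : Integrable fun s : ℝ => g (a + s * I)) :
    rayIntegral g a (π / 2) - rayIntegral g a (-(π / 2)) = I * ∫ s : ℝ, g (a + s * I) := by
  have hI : cexp (I * ↑(π / 2)) = I := by
    rw [mul_comm]; push_cast; exact exp_pi_div_two_mul_I
  have hnegI : cexp (I * ↑(-(π / 2))) = -I := by
    rw [mul_comm]; push_cast; rw [neg_mul, exp_neg, exp_pi_div_two_mul_I, inv_I]
  have hlower : ∫ t in Ioi (0:ℝ), g (a + t * -I) = ∫ s in Iic (0:ℝ), g (a + s * I) := by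
    simpa using integral_comp_neg_Ioi 0 fun s : ℝ => g (a + s * I)
  rw [rayIntegral, rayIntegral, hI, hnegI, integral_mul_const, integral_mul_const, hlower,
    ← intervalIntegral.integral_Iic_add_Ioi hg.integrableOn hg.integrableOn]
  ring

section RayRotation

variable {g : ℂ → ℂ}

lemma hasDerivAt_rayIntegrand_angle (hg : Differentiable ℂ g) (a : ℂ) (t θ : ℝ) :
    HasDerivAt (fun θ : ℝ => g (a + t * cexp (I * θ)) * cexp (I * θ))
      (I * cexp (I * θ) * (g (a + t * cexp (I * θ))
        + t * cexp (I * θ) * deriv g (a + t * cexp (I * θ)))) θ := by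
  have hw : HasDerivAt (fun θ : ℂ => cexp (I * θ)) (cexp (I * θ) * I) θ := by
    simpa using ((hasDerivAt_id (θ : ℂ)).const_mul I).cexp
  have hz := (hg _).hasDerivAt.comp (θ : ℂ) ((hw.const_mul (t : ℂ)).const_add a)
  exact (hz.mul hw).comp_ofReal.congr_deriv (by simp only [Function.comp]; ring)

lemma hasDerivAt_rayIntegrand_radius (hg : Differentiable ℂ g) (a w : ℂ) (t : ℝ) :
    HasDerivAt (fun t : ℝ => I * t * g (a + t * w) * w)
      (I * w * (g (a + t * w) + t * w * deriv g (a + t * w))) t := by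
  have hz := (hg _).hasDerivAt.comp (t : ℂ) (((hasDerivAt_id (t : ℂ)).mul_const w).const_add a)
  exact ((((hasDerivAt_id (t : ℂ)).const_mul I).mul hz).mul_const w).comp_ofReal.congr_deriv
    (by simp only [Function.comp, id]; ring)

variable {a : ℂ} {θ₀ : ℝ}

lemma RayDominated.integrableOn (hg : Differentiable ℂ g) (h : RayDominated g a θ₀) :
    IntegrableOn (fun t : ℝ => g (a + t * cexp (I * θ₀)) * cexp (I * θ₀)) (Ioi 0) := by
  obtain ⟨bound, hbound, hdom⟩ := h
  have := hg.continuous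
  refine hbound.mono' (by fun_prop) ((ae_restrict_iff' measurableSet_Ioi).2 (.of_forall ?_))
  intro t (ht : 0 < t)
  have := hdom.self_of_nhds t ht
  rw [norm_mul, norm_exp_I_mul_ofReal, mul_one]
  nlinarith [norm_nonneg (g (a + t * cexp (I * θ₀))),
    norm_nonneg (deriv g (a + t * cexp (I * θ₀)))]

/-- The angular derivative of the ray integrand is the radial derivative of
`t ↦ i t g(a + t w) w`, which vanishes at `0` and, being integrable, at `∞`. -/
lemma RayDominated.integral_deriv_angle_eq_zero (hg : Differentiable ℂ g)
    (h : RayDominated g a θ₀) {w : ℂ} (hw : w = cexp (I * θ₀))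
    (hint' : IntegrableOn (fun t : ℝ => I * w * (g (a + t * w) + t * w * deriv g (a + t * w)))
      (Ioi 0)) :
    ∫ t in Ioi (0:ℝ), I * w * (g (a + t * w) + t * w * deriv g (a + t * w)) = 0 := by
  obtain ⟨bound, hbound, hdom⟩ := h
  have hradial (t : ℝ) := hasDerivAt_rayIntegrand_radius hg a w t
  have := hg.continuous
  have hint : IntegrableOn (fun t : ℝ => I * t * g (a + t * w) * w) (Ioi 0) := by
    refine hbound.mono' (by fun_prop) ((ae_restrict_iff' measurableSet_Ioi).2 (.of_forall ?_))
    intro t (ht : 0 < t)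
    have := hdom.self_of_nhds t ht
    simp only [hw, norm_mul, norm_I, norm_exp_I_mul_ofReal, norm_real,
      Real.norm_of_nonneg ht.le, one_mul, mul_one] at this ⊢
    nlinarith [norm_nonneg (g (a + t * cexp (I * θ₀))),
      norm_nonneg (deriv g (a + t * cexp (I * θ₀)))]
  simpa using integral_Ioi_of_hasDerivAt_of_tendsto' (fun t _ => hradial t) hint'
    (tendsto_zero_of_hasDerivAt_of_integrableOn_Ioi (fun t _ => hradial t) hint' hint)

theorem RayDominated.hasDerivAt_rayIntegral (hg : Differentiable ℂ g)
    (h : RayDominated g a θ₀) : HasDerivAt (rayIntegral g a) 0 θ₀ := by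
  obtain ⟨bound, hbound, hdom⟩ := h
  obtain ⟨s, hs, hsdom⟩ := hdom.exists_mem
  set w : ℝ → ℂ := fun θ => cexp (I * θ)
  set F' : ℝ → ℝ → ℂ := fun θ t =>
    I * w θ * (g (a + t * w θ) + t * w θ * deriv g (a + t * w θ))
  have hF'_le : ∀ᵐ t ∂volume.restrict (Ioi 0), ∀ θ ∈ s, ‖F' θ t‖ ≤ bound t := by
    refine (ae_restrict_iff' measurableSet_Ioi).2 (.of_forall fun t (ht : 0 < t) θ hθ => ?_)
    have hwθ : ‖w θ‖ = 1 := norm_exp_I_mul_ofReal θ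
    calc ‖F' θ t‖ ≤ ‖g (a + t * w θ)‖ + t * ‖deriv g (a + t * w θ)‖ := by
          simp only [F', norm_mul, norm_I, hwθ, one_mul]
          refine (norm_add_le _ _).trans_eq ?_
          simp [hwθ, ht.le]
      _ ≤ bound t := by
          nlinarith [hsdom θ hθ t ht, norm_nonneg (g (a + t * w θ)),
            norm_nonneg (deriv g (a + t * w θ))]
  have := hg.continuous
  have := measurable_deriv g
  obtain ⟨hF'_int, hderiv⟩ := hasDerivAt_integral_of_dominated_loc_of_deriv_le
    (μ := volume.restrict (Ioi 0)) (F := fun θ (t : ℝ) => g (a + t * w θ) * w θ) (F' := F')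
    hs (.of_forall fun θ => by fun_prop) (RayDominated.integrableOn hg ⟨bound, hbound, hdom⟩)
    (by fun_prop) hF'_le hbound
    (.of_forall fun t θ _ => hasDerivAt_rayIntegrand_angle hg a t θ)
  rwa [RayDominated.integral_deriv_angle_eq_zero hg ⟨bound, hbound, hdom⟩ rfl hF'_int] at hderiv

theorem rayIntegral_eq_of_rayDominated (hg : Differentiable ℂ g) {θ₁ θ₂ : ℝ} (h₁₂ : θ₁ ≤ θ₂)
    (h : ∀ θ ∈ Icc θ₁ θ₂, RayDominated g a θ) : rayIntegral g a θ₂ = rayIntegral g a θ₁ :=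
  constant_of_has_deriv_right_zero
    (fun θ hθ => ((h θ hθ).hasDerivAt_rayIntegral hg).continuousAt.continuousWithinAt)
    (fun θ hθ => ((h θ (Ico_subset_Icc_self hθ)).hasDerivAt_rayIntegral hg).hasDerivWithinAt)
    θ₂ ⟨h₁₂, le_rfl⟩

end RayRotation

lemma integrable_exp_quadratic {p : ℝ} (hp : p < 0) (q r : ℝ) :
    Integrable fun t : ℝ => Real.exp (p * t ^ 2 + q * t + r) := by
  refine (integrable_cexp_quadratic' (b := p) (by simpa using hp) q r).norm.congr
    (.of_forall fun t => ?_)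
  simp only [norm_exp]
  simp [← ofReal_pow]

lemma re_exp_I_mul_sq (θ : ℝ) : (cexp (I * θ) ^ 2).re = Real.cos (2 * θ) := by
  rw [← exp_nat_mul, ← exp_ofReal_mul_I_re]
  push_cast
  ring_nf

lemma cos_two_mul_neg_of_abs_mem_Ioo {θ : ℝ} (h : |θ| ∈ Ioo (π / 4) (3 * π / 4)) :
    Real.cos (2 * θ) < 0 := by
  rw [← Real.cos_abs, abs_mul, abs_two]
  exact Real.cos_neg_of_pi_div_two_lt_of_lt (by linarith [h.1]) (by linarith [h.2])

section Quadratic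

variable {c : ℝ}

lemma hasDerivAt_cexp_quadratic (c : ℝ) (b d z : ℂ) :
    HasDerivAt (fun z => cexp (c * z ^ 2 + b * z + d))
      ((2 * c * z + b) * cexp (c * z ^ 2 + b * z + d)) z :=
  ((((hasDerivAt_pow 2 z).const_mul (c : ℂ)).add ((hasDerivAt_id z).const_mul b)).add_const
    d).cexp.congr_deriv (by simp only [Pi.add_apply, id]; push_cast; ring)

lemma re_quadratic_add_mul_le (hc : 0 ≤ c) (b d a : ℂ) {w : ℂ} (hw : ‖w‖ = 1) {κ : ℝ}
    (hκ : (w ^ 2).re ≤ -κ) {t : ℝ} (ht : 0 ≤ t) :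
    (c * (a + t * w) ^ 2 + b * (a + t * w) + d).re ≤
      ‖c * a ^ 2 + b * a + d‖ + ‖2 * c * a + b‖ * t - c * κ * t ^ 2 := by
  have hexpand : c * (a + t * w) ^ 2 + b * (a + t * w) + d =
      (c * a ^ 2 + b * a + d) + (2 * c * a + b) * w * t + (c * t ^ 2 : ℝ) * w ^ 2 := by
    push_cast; ring
  have hlin : ((2 * c * a + b) * w * t).re ≤ ‖2 * c * a + b‖ * t := by
    refine (re_le_norm _).trans_eq ?_
    simp [hw, abs_of_nonneg ht]
  rw [hexpand, add_re, add_re, re_ofReal_mul]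
  nlinarith [re_le_norm (c * a ^ 2 + b * a + d), mul_nonneg hc (sq_nonneg t)]

lemma norm_two_mul_add_mul_add_le (hc : 0 ≤ c) (b a : ℂ) {w : ℂ} (hw : ‖w‖ = 1) {t : ℝ}
    (ht : 0 ≤ t) : ‖2 * c * (a + t * w) + b‖ ≤ ‖2 * c * a + b‖ + 2 * c * t := by
  calc ‖2 * c * (a + t * w) + b‖ = ‖(2 * c * a + b) + (2 * c * t : ℝ) * w‖ := by
        congr 1; push_cast; ring
    _ ≤ ‖2 * c * a + b‖ + 2 * c * t := by
        refine (norm_add_le _ _).trans_eq ?_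
        rw [norm_mul, hw, mul_one, norm_real, Real.norm_of_nonneg (by positivity)]

lemma one_add_mul_one_add_add_mul_le_mul_exp {B c t : ℝ} (hB : 0 ≤ B) (hc : 0 ≤ c)
    (ht : 0 ≤ t) : (1 + t) * (1 + B + 2 * c * t) ≤ (1 + B + 2 * c) * Real.exp (2 * t) := by
  have h1 : 1 + t ≤ Real.exp t := by linarith [Real.add_one_le_exp t]
  have h2 : (1 + t) * (1 + t) ≤ Real.exp (2 * t) := by
    rw [two_mul, Real.exp_add]
    exact mul_le_mul h1 h1 (by linarith) (Real.exp_pos t).le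
  calc (1 + t) * (1 + B + 2 * c * t) ≤ (1 + B + 2 * c) * ((1 + t) * (1 + t)) := by
        nlinarith [mul_nonneg (by linarith : 0 ≤ 1 + t) (by positivity : 0 ≤ (1 + B) * t + 2 * c)]
    _ ≤ (1 + B + 2 * c) * Real.exp (2 * t) := by gcongr

theorem rayDominated_cexp_quadratic (hc : 0 < c) (b d a : ℂ) {θ₀ : ℝ}
    (hθ₀ : Real.cos (2 * θ₀) < 0) :
    RayDominated (fun z => cexp (c * z ^ 2 + b * z + d)) a θ₀ := by
  obtain ⟨κ, hκ, hθ₀κ⟩ : ∃ κ > 0, Real.cos (2 * θ₀) < -κ :=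
    ⟨-Real.cos (2 * θ₀) / 2, by linarith, by linarith⟩
  set A := ‖c * a ^ 2 + b * a + d‖
  set B := ‖2 * c * a + b‖
  have hcκ : 0 < c * κ := mul_pos hc hκ
  -- the polynomial weights coming from `1 + t` and `g'` are absorbed into `exp (2 t)`
  refine ⟨fun t => (1 + B + 2 * c) * Real.exp (-(c * κ) * t ^ 2 + (B + 2) * t + A),
    ((integrable_exp_quadratic (by linarith) _ _).const_mul _).integrableOn, ?_⟩
  have hnear : ∀ᶠ θ : ℝ in 𝓝 θ₀, Real.cos (2 * θ) < -κ :=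
    ((by fun_prop : Continuous fun θ : ℝ => Real.cos (2 * θ)).tendsto θ₀).eventually_lt_const
      hθ₀κ
  filter_upwards [hnear] with θ hθ t ht
  have hw : ‖cexp (I * θ)‖ = 1 := norm_exp_I_mul_ofReal θ
  have hre := re_quadratic_add_mul_le hc.le b d a hw ((re_exp_I_mul_sq θ).trans_le hθ.le) ht.le
  have hderiv := norm_two_mul_add_mul_add_le hc.le b a hw ht.le
  rw [(hasDerivAt_cexp_quadratic c b d _).deriv, norm_mul, norm_exp]
  set z := a + t * cexp (I * θ)
  calc (1 + t) * (Real.exp (c * z ^ 2 + b * z + d).re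
        + ‖2 * c * z + b‖ * Real.exp (c * z ^ 2 + b * z + d).re)
      = (1 + t) * (1 + ‖2 * c * z + b‖) * Real.exp (c * z ^ 2 + b * z + d).re := by ring
    _ ≤ (1 + t) * (1 + B + 2 * c * t) * Real.exp (A + B * t - c * κ * t ^ 2) := by
        gcongr (1 + t) * ?_ * Real.exp ?_
        linarith
    _ ≤ (1 + B + 2 * c) * Real.exp (2 * t) * Real.exp (A + B * t - c * κ * t ^ 2) := by
        exact mul_le_mul_of_nonneg_right
          (one_add_mul_one_add_add_mul_le_mul_exp (norm_nonneg _) hc.le ht.le) (Real.exp_pos _).le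
    _ = (1 + B + 2 * c) * Real.exp (-(c * κ) * t ^ 2 + (B + 2) * t + A) := by
        rw [mul_assoc, ← Real.exp_add]; ring_nf

lemma quadratic_add_mul_I (c : ℝ) (b d a : ℂ) (s : ℝ) :
    c * (a + s * I) ^ 2 + b * (a + s * I) + d =
      -c * s ^ 2 + (2 * c * a + b) * I * s + (c * a ^ 2 + b * a + d) := by
  linear_combination (c * s ^ 2 : ℂ) * I_sq

lemma integrable_cexp_quadratic_add_mul_I (hc : 0 < c) (b d a : ℂ) :
    Integrable fun s : ℝ => cexp (c * (a + s * I) ^ 2 + b * (a + s * I) + d) := by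
  simp_rw [quadratic_add_mul_I]
  exact integrable_cexp_quadratic (by simpa using hc) _ _

lemma integral_cexp_quadratic_add_mul_I (hc : 0 < c) (b d a : ℂ) :
    ∫ s : ℝ, cexp (c * (a + s * I) ^ 2 + b * (a + s * I) + d) =
      (π / c) ^ (1 / 2 : ℂ) * cexp (d - b ^ 2 / (4 * c)) := by
  have hc' : (c : ℂ) ≠ 0 := ofReal_ne_zero.2 hc.ne'
  simp_rw [quadratic_add_mul_I]
  rw [integral_cexp_quadratic (by simpa using hc), neg_neg]
  congr 2
  field_simp
  linear_combination ((2 * c * a + b) ^ 2 : ℂ) * I_sq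

lemma one_div_two_pi_I_mul_I_mul_sqrt_pi_div (hc : 0 < c) (w : ℂ) :
    1 / (2 * π * I) * (I * ((π / c) ^ (1 / 2 : ℂ) * w)) = w / √(4 * π * c) := by
  have hsqrt : √(4 * π * c) * √(π / c) = 2 * π := by
    rw [← Real.sqrt_mul (by positivity), show 4 * π * c * (π / c) = (2 * π) ^ 2 by
      field_simp; ring, Real.sqrt_sq (by positivity)]
  have hcpow : (π / c : ℂ) ^ (1 / 2 : ℂ) = √(π / c) := by
    rw [Real.sqrt_eq_rpow, ofReal_cpow (by positivity)]
    push_cast; rfl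
  have hreal : √(π / c) / (2 * π) = 1 / √(4 * π * c) := by
    rw [div_eq_div_iff (by positivity) (by positivity)]
    linarith
  calc 1 / (2 * π * I) * (I * ((π / c : ℂ) ^ (1 / 2 : ℂ) * w))
      = ((√(π / c) / (2 * π) : ℝ) : ℂ) * w := by
        rw [hcpow]; push_cast; field_simp
    _ = w / √(4 * π * c) := by
        rw [hreal]; push_cast; ring

theorem contourIntegral_cexp_quadratic (a : ℝ) (hc : 0 < c) (b d : ℂ) :
    1 / (2 * π * I) * contourIntegral a (π / 3) (fun z => cexp (c * z ^ 2 + b * z + d)) =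
      cexp (d - b ^ 2 / (4 * c)) / √(4 * π * c) := by
  have hg : Differentiable ℂ fun z => cexp (c * z ^ 2 + b * z + d) :=
    fun z => (hasDerivAt_cexp_quadratic c b d z).differentiableAt
  have hπ := Real.pi_pos
  have hupper (θ : ℝ) (hθ : θ ∈ Icc (π / 3) (π / 2)) :=
    rayDominated_cexp_quadratic hc b d a (θ₀ := θ) <| cos_two_mul_neg_of_abs_mem_Ioo <| by
      rw [abs_of_pos (by linarith [hθ.1])]; constructor <;> linarith [hθ.1, hθ.2]
  have hlower (θ : ℝ) (hθ : θ ∈ Icc (-(π / 2)) (-(π / 3))) :=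
    rayDominated_cexp_quadratic hc b d a (θ₀ := θ) <| cos_two_mul_neg_of_abs_mem_Ioo <| by
      rw [abs_of_neg (by linarith [hθ.2])]; constructor <;> linarith [hθ.1, hθ.2]
  rw [contourIntegral_eq_rayIntegral_sub ((hupper _ ⟨le_rfl, by linarith⟩).integrableOn hg)
      ((hlower _ ⟨by linarith, le_rfl⟩).integrableOn hg),
    ← rayIntegral_eq_of_rayDominated hg (by linarith) hupper,
    rayIntegral_eq_of_rayDominated hg (by linarith) hlower,
    rayIntegral_pi_div_two_sub_rayIntegral_neg (integrable_cexp_quadratic_add_mul_I hc b d a),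
    integral_cexp_quadratic_add_mul_I hc, one_div_two_pi_I_mul_I_mul_sqrt_pi_div hc]

end Quadratic

/-- **Gaussian contour integral evaluation.** -/
theorem gaussian_contour_integral_evaluation (η η' x y : ℝ) (hη : η < η') :
    (1 / (2 * (Real.pi : ℂ) * Complex.I)) *
      contourIntegral (1/4) (Real.pi/3) (fun z =>
        Complex.exp ((z - (η:ℂ))^3/3 - (z - (η':ℂ))^3/3
          - (x:ℂ)*(z - (η:ℂ)) + (y:ℂ)*(z - (η':ℂ))))
    = (Real.exp ((-(η-η')^4 + 6*(x+y)*(η-η')^2 + 3*(x-y)^2) / (12*(η-η'))) : ℂ)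
        / (Real.sqrt (4*Real.pi*(η'-η)) : ℂ) := by
  have hquadratic : (fun z => cexp ((z - η) ^ 3 / 3 - (z - η') ^ 3 / 3 - x * (z - η)
      + y * (z - η'))) = fun z : ℂ => cexp (((η' - η : ℝ) : ℂ) * z ^ 2
        + ((η ^ 2 - η' ^ 2 - x + y : ℝ) : ℂ) * z
        + (((η' ^ 3 - η ^ 3) / 3 + x * η - y * η' : ℝ) : ℂ)) := by
    funext z; push_cast; ring_nf
  have hexponent :
      (η' ^ 3 - η ^ 3) / 3 + x * η - y * η' - (η ^ 2 - η' ^ 2 - x + y) ^ 2 / (4 * (η' - η))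
        = (-(η - η') ^ 4 + 6 * (x + y) * (η - η') ^ 2 + 3 * (x - y) ^ 2) / (12 * (η - η')) := by
    field_simp [sub_ne_zero.2 hη.ne, sub_ne_zero.2 hη.ne']
    ring
  rw [hquadratic, contourIntegral_cexp_quadratic _ (sub_pos.2 hη), ← hexponent]
  push_cast
  rfl

end
end
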